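/- arXiv:2207.11824 — 7 statements merged into one kernel-verified Lean document; each statement's English description precedes it below -/
import Mathlib

section
/- Let X_1,…,X_T be {0,1}-valued random variables on a probability space such that for every i, the conditional expectation of X_i given X_1,…,X_{i−1} is at most q almost surely, where 0 < q < 1. Then for every real w > 0, the probability that there exists some m with 1 ≤ m ≤ T such that ∑_{i=T−m+1}^{T} X_i ≥ √w + 6mq is at most 2^{−√w}/(4q). -/
/-! For `{0,1}`-valued `x` one has `exp (t x) = 1 + (exp t - 1) x`, and conditioning on the past
one epoch at a time gives `E[∏_{a < i ≤ b} (1 + c X i)] ≤ (1 + c q)^(b - a)`. Markov's inequality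
with `t = log 4` bounds the probability that the last `m` epochs hold at least `√w + 6mq` errors
by `4^(-√w) r^m`, where `r = (1 + 3q) 4^(-6q) ≤ 1 / (1 + 4q)`. A union bound over `m` and the
geometric series `∑ r^m ≤ r / (1 - r) ≤ 1 / (4q)` finish the proof. -/

open MeasureTheory ProbabilityTheory

/-- The σ-algebra generated by the variables `X j` for `1 ≤ j < i`. -/
def pastSigmaNat {Ω : Type*} (X : ℕ → Ω → ℝ) (i : ℕ) :
    MeasurableSpace Ω :=
  ⨆ j : ℕ, ⨆ _ : 1 ≤ j ∧ j < i, MeasurableSpace.comap (X j) Real.measurableSpace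

open Finset Real

theorem integral_mul_le_of_condExp_le {Ω : Type*} {m mΩ : MeasurableSpace Ω} {μ : Measure Ω}
    [IsFiniteMeasure μ] (hm : m ≤ mΩ) {f g : Ω → ℝ} {C q : ℝ} (hf : StronglyMeasurable[m] f)
    (hf0 : ∀ ω, 0 ≤ f ω) (hf_bound : ∀ᵐ ω ∂μ, ‖f ω‖ ≤ C) (hg : Integrable g μ)
    (hgq : ∀ᵐ ω ∂μ, (μ[g | m]) ω ≤ q) :
    ∫ ω, f ω * g ω ∂μ ≤ q * ∫ ω, f ω ∂μ := by
  have hf_int : Integrable f μ := .of_bound (hf.mono hm).aestronglyMeasurable C hf_bound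
  calc ∫ ω, f ω * g ω ∂μ = ∫ ω, f ω * (μ[g | m]) ω ∂μ := by
        rw [← integral_condExp hm]
        exact integral_congr_ae (condExp_stronglyMeasurable_mul_of_bound hm hf hg C hf_bound)
    _ ≤ ∫ ω, f ω * q ∂μ := by
        refine integral_mono_ae
          (integrable_condExp.bdd_mul (hf.mono hm).aestronglyMeasurable hf_bound)
          (hf_int.mul_const q) ?_
        filter_upwards [hgq] with ω hω using mul_le_mul_of_nonneg_left hω (hf0 ω)
    _ = q * ∫ ω, f ω ∂μ := by rw [integral_mul_const, mul_comm]

theorem exp_mul_eq_one_add_mul_of_zero_or_one {x : ℝ} (hx : x = 0 ∨ x = 1) (t : ℝ) :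
    exp (t * x) = 1 + (exp t - 1) * x := by
  rcases hx with rfl | rfl <;> simp

section PastSigma

variable {Ω : Type*} {X : ℕ → Ω → ℝ} {c : ℝ}

theorem measurable_pastSigmaNat {i j : ℕ} (hj : 1 ≤ j) (hji : j < i) :
    Measurable[pastSigmaNat X i] (X j) :=
  Measurable.of_comap_le (le_iSup_of_le j (le_iSup_of_le ⟨hj, hji⟩ le_rfl))

theorem prod_one_add_mul_mem_Icc (hX : ∀ i ω, X i ω ∈ Set.Icc (0 : ℝ) 1) (hc : 0 ≤ c)
    (F : Finset ℕ) (ω : Ω) : ∏ i ∈ F, (1 + c * X i ω) ∈ Set.Icc 0 ((1 + c) ^ #F) := by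
  have hfac : ∀ i, 0 ≤ 1 + c * X i ω ∧ 1 + c * X i ω ≤ 1 + c := fun i => by
    have := hX i ω
    constructor <;> nlinarith [this.1, this.2]
  exact ⟨prod_nonneg fun i _ => (hfac i).1,
    (prod_le_prod (fun i _ => (hfac i).1) fun i _ => (hfac i).2).trans_eq (prod_const _)⟩

theorem norm_prod_one_add_mul_le (hX : ∀ i ω, X i ω ∈ Set.Icc (0 : ℝ) 1) (hc : 0 ≤ c)
    (F : Finset ℕ) (ω : Ω) : ‖∏ i ∈ F, (1 + c * X i ω)‖ ≤ (1 + c) ^ #F :=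
  (norm_of_nonneg (prod_one_add_mul_mem_Icc hX hc F ω).1).trans_le
    (prod_one_add_mul_mem_Icc hX hc F ω).2

variable [mΩ : MeasurableSpace Ω] {μ : Measure Ω}

theorem pastSigmaNat_le (hmeas : ∀ i, Measurable (X i)) (i : ℕ) : pastSigmaNat X i ≤ mΩ :=
  iSup_le fun j => iSup_le fun _ => (hmeas j).comap_le

theorem integrable_prod_one_add_mul [IsFiniteMeasure μ] (hmeas : ∀ i, Measurable (X i))
    (hX : ∀ i ω, X i ω ∈ Set.Icc (0 : ℝ) 1) (hc : 0 ≤ c) (F : Finset ℕ) :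
    Integrable (fun ω => ∏ i ∈ F, (1 + c * X i ω)) μ :=
  .of_bound (by fun_prop) ((1 + c) ^ #F) (ae_of_all μ (norm_prod_one_add_mul_le hX hc F))

theorem integral_prod_one_add_mul_le [IsProbabilityMeasure μ] (hmeas : ∀ i, Measurable (X i))
    (hX : ∀ i ω, X i ω ∈ Set.Icc (0 : ℝ) 1) (hc : 0 ≤ c) {q : ℝ} (hq : 0 ≤ q) {a b : ℕ}
    (hab : a ≤ b) (hcond : ∀ i, a < i → i ≤ b → ∀ᵐ ω ∂μ, (μ[X i | pastSigmaNat X i]) ω ≤ q) :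
    ∫ ω, ∏ i ∈ Ioc a b, (1 + c * X i ω) ∂μ ≤ (1 + c * q) ^ (b - a) := by
  induction b, hab using Nat.le_induction with
  | base => simp
  | succ b hab ih =>
    set f := fun ω => ∏ i ∈ Ioc a b, (1 + c * X i ω)
    have hf_meas : StronglyMeasurable[pastSigmaNat X (b + 1)] f :=
      (Finset.measurable_prod _ fun i hi => measurable_const.add
        ((measurable_pastSigmaNat (by grind) (by grind)).const_mul c)).stronglyMeasurable
    have hX_int : Integrable (X (b + 1)) μ :=
      .of_bound (hmeas _).aestronglyMeasurable 1 <| ae_of_all μ fun ω =>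
        (norm_of_nonneg (hX _ ω).1).trans_le (hX _ ω).2
    have hf_bound : ∀ᵐ ω ∂μ, ‖f ω‖ ≤ (1 + c) ^ #(Ioc a b) :=
      ae_of_all μ (norm_prod_one_add_mul_le hX hc _)
    have hfX_int : Integrable (fun ω => f ω * X (b + 1) ω) μ :=
      hX_int.bdd_mul (hf_meas.mono (pastSigmaNat_le hmeas _)).aestronglyMeasurable hf_bound
    have hstep : ∫ ω, f ω * X (b + 1) ω ∂μ ≤ q * ∫ ω, f ω ∂μ :=
      integral_mul_le_of_condExp_le (pastSigmaNat_le hmeas _) hf_meas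
        (fun ω => (prod_one_add_mul_mem_Icc hX hc _ ω).1) hf_bound hX_int
        (hcond _ (by omega) le_rfl)
    calc ∫ ω, ∏ i ∈ Ioc a (b + 1), (1 + c * X i ω) ∂μ
        = ∫ ω, f ω + c * (f ω * X (b + 1) ω) ∂μ := by
          simp_rw [prod_Ioc_succ_top hab]; congr 1; ext ω; ring
      _ = ∫ ω, f ω ∂μ + c * ∫ ω, f ω * X (b + 1) ω ∂μ := by
          rw [integral_add (integrable_prod_one_add_mul hmeas hX hc _) (hfX_int.const_mul c),
            integral_const_mul]
      _ ≤ (1 + c * q) * ∫ ω, f ω ∂μ := by linarith [mul_le_mul_of_nonneg_left hstep hc]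
      _ ≤ (1 + c * q) * (1 + c * q) ^ (b - a) := by
          gcongr
          exact ih fun i hai hib => hcond i hai (by omega)
      _ = (1 + c * q) ^ (b + 1 - a) := by rw [← pow_succ', Nat.sub_add_comm hab]

theorem measureReal_sum_Ioc_ge_le_exp_mul [IsProbabilityMeasure μ] (hmeas : ∀ i, Measurable (X i))
    (h01 : ∀ i ω, X i ω = 0 ∨ X i ω = 1) {t q : ℝ} (ht : 0 ≤ t) (hq : 0 ≤ q) {a b : ℕ}
    (hab : a ≤ b) (hcond : ∀ i, a < i → i ≤ b → ∀ᵐ ω ∂μ, (μ[X i | pastSigmaNat X i]) ω ≤ q)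
    (ε : ℝ) :
    μ.real {ω | ε ≤ ∑ i ∈ Ioc a b, X i ω} ≤ exp (-t * ε) * (1 + (exp t - 1) * q) ^ (b - a) := by
  have hX : ∀ i ω, X i ω ∈ Set.Icc (0 : ℝ) 1 := fun i ω => by
    rcases h01 i ω with h | h <;> simp [h]
  have hc : 0 ≤ exp t - 1 := sub_nonneg.2 (one_le_exp ht)
  have hexp : (fun ω => exp (t * ∑ i ∈ Ioc a b, X i ω)) =
      fun ω => ∏ i ∈ Ioc a b, (1 + (exp t - 1) * X i ω) := by
    ext ω
    rw [mul_sum, exp_sum]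
    exact prod_congr rfl fun i _ => exp_mul_eq_one_add_mul_of_zero_or_one (h01 i ω) t
  calc μ.real {ω | ε ≤ ∑ i ∈ Ioc a b, X i ω}
      ≤ exp (-t * ε) * mgf (fun ω => ∑ i ∈ Ioc a b, X i ω) μ t :=
        measure_ge_le_exp_mul_mgf ε ht (hexp ▸ integrable_prod_one_add_mul hmeas hX hc _)
    _ ≤ exp (-t * ε) * (1 + (exp t - 1) * q) ^ (b - a) := by
        rw [mgf, hexp]
        gcongr
        exact integral_prod_one_add_mul_le hmeas hX hc hq hab hcond

end PastSigma

theorem one_add_three_mul_mul_one_add_four_mul_le {q : ℝ} (hq : 0 ≤ q) :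
    (1 + 3 * q) * (1 + 4 * q) ≤ (4 : ℝ) ^ (6 * q) := by
  have hlog : 7 ≤ 6 * log 4 := by
    have : log 4 = 2 * log 2 := by rw [show (4 : ℝ) = 2 ^ 2 by norm_num, log_pow]; norm_num
    linarith [log_two_gt_d9]
  calc (1 + 3 * q) * (1 + 4 * q) ≤ exp (3 * q) * exp (4 * q) := by
        gcongr
        · linarith [add_one_le_exp (3 * q)]
        · linarith [add_one_le_exp (4 * q)]
    _ = exp (7 * q) := by rw [← exp_add]; ring_nf
    _ ≤ exp (log 4 * (6 * q)) := exp_le_exp.2 (by nlinarith)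
    _ = (4 : ℝ) ^ (6 * q) := (rpow_def_of_pos (by norm_num) _).symm

theorem sum_pow_mul_four_rpow_le {q s : ℝ} (hq : 0 < q) (hs : 0 ≤ s) (T : ℕ) :
    ∑ m ∈ Icc 1 T, (1 + 3 * q) ^ m * (4 : ℝ) ^ (-(s + 6 * m * q)) ≤ (2 : ℝ) ^ (-s) / (4 * q) := by
  set r := (1 + 3 * q) * (4 : ℝ) ^ (-(6 * q)) with hr_def
  have hr0 : 0 ≤ r := by positivity
  have hr : r * (1 + 4 * q) ≤ 1 := by
    have h4 : (0 : ℝ) < 4 ^ (6 * q) := by positivity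
    calc r * (1 + 4 * q) = (1 + 3 * q) * (1 + 4 * q) * ((4 : ℝ) ^ (6 * q))⁻¹ := by
          rw [hr_def, rpow_neg (by norm_num)]; ring
      _ ≤ (4 : ℝ) ^ (6 * q) * ((4 : ℝ) ^ (6 * q))⁻¹ := by
          gcongr; exact one_add_three_mul_mul_one_add_four_mul_le hq.le
      _ = 1 := mul_inv_cancel₀ h4.ne'
  have hr1 : r < 1 := by nlinarith
  have hgeom : ∑ m ∈ Icc 1 T, r ^ m ≤ 1 / (4 * q) := by
    rw [← Ico_add_one_right_eq_Icc]
    refine (geom_sum_Ico_le_of_lt_one hr0 hr1).trans ?_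
    rw [pow_one, div_le_div_iff₀ (by linarith) (by positivity)]
    linarith
  have hterm : ∀ m : ℕ, (1 + 3 * q) ^ m * (4 : ℝ) ^ (-(s + 6 * m * q)) = 4 ^ (-s) * r ^ m := by
    intro m
    rw [mul_pow, ← rpow_natCast ((4 : ℝ) ^ _), ← rpow_mul (by norm_num), neg_add,
      rpow_add (by norm_num)]
    ring_nf
  calc ∑ m ∈ Icc 1 T, (1 + 3 * q) ^ m * (4 : ℝ) ^ (-(s + 6 * m * q))
      = 4 ^ (-s) * ∑ m ∈ Icc 1 T, r ^ m := by rw [mul_sum]; exact sum_congr rfl fun m _ => hterm m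
    _ ≤ 2 ^ (-s) * (1 / (4 * q)) :=
        mul_le_mul (rpow_le_rpow_of_nonpos (by norm_num) (by norm_num) (by linarith)) hgeom
          (sum_nonneg fun m _ => pow_nonneg hr0 m) (by positivity)
    _ = (2 : ℝ) ^ (-s) / (4 * q) := mul_one_div _ _

theorem interval_error_bound_general
    {Ω : Type*} [mΩ : MeasurableSpace Ω] (μ : Measure Ω) [IsProbabilityMeasure μ]
    (T : ℕ) (X : ℕ → Ω → ℝ) (q : ℝ) (hq0 : 0 < q)
    (hmeas : ∀ i, Measurable (X i))
    (h01 : ∀ i ω, X i ω = 0 ∨ X i ω = 1)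
    (hcond : ∀ i ∈ Finset.Icc 1 T, ∀ᵐ ω ∂μ, (μ[X i | pastSigmaNat X i]) ω ≤ q)
    (w : ℝ) :
    μ {ω | ∃ m : ℕ, 1 ≤ m ∧ m ≤ T ∧
        Real.sqrt w + 6 * m * q ≤ ∑ i ∈ Finset.Icc (T - m + 1) T, X i ω} ≤
      ENNReal.ofReal ((2 : ℝ) ^ (-Real.sqrt w) / (4 * q)) := by
  have htail : ∀ m ∈ Icc 1 T, μ.real {ω | √w + 6 * m * q ≤ ∑ i ∈ Icc (T - m + 1) T, X i ω} ≤
      (1 + 3 * q) ^ m * (4 : ℝ) ^ (-(√w + 6 * m * q)) := by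
    intro m hm
    have hmT : m ≤ T := (mem_Icc.1 hm).2
    have h := measureReal_sum_Ioc_ge_le_exp_mul hmeas h01
      (log_nonneg (by norm_num : (1 : ℝ) ≤ 4)) hq0.le (Nat.sub_le T m)
      (fun i hi hiT => hcond i (mem_Icc.2 ⟨by omega, hiT⟩)) (√w + 6 * m * q)
    rw [Icc_add_one_left_eq_Ioc]
    convert h using 1
    rw [rpow_def_of_pos (by norm_num), exp_log (by norm_num), Nat.sub_sub_self hmT]
    ring_nf
  have hunion : {ω | ∃ m : ℕ, 1 ≤ m ∧ m ≤ T ∧ √w + 6 * m * q ≤ ∑ i ∈ Icc (T - m + 1) T, X i ω} =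
      ⋃ m ∈ Icc 1 T, {ω | √w + 6 * m * q ≤ ∑ i ∈ Icc (T - m + 1) T, X i ω} := by
    ext ω
    simp [and_assoc]
  rw [hunion, ← ofReal_measureReal (measure_ne_top _ _)]
  refine ENNReal.ofReal_le_ofReal ?_
  calc μ.real (⋃ m ∈ Icc 1 T, {ω | √w + 6 * m * q ≤ ∑ i ∈ Icc (T - m + 1) T, X i ω})
      ≤ ∑ m ∈ Icc 1 T, μ.real {ω | √w + 6 * m * q ≤ ∑ i ∈ Icc (T - m + 1) T, X i ω} :=
        measureReal_biUnion_finset_le _ _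
    _ ≤ ∑ m ∈ Icc 1 T, (1 + 3 * q) ^ m * (4 : ℝ) ^ (-(√w + 6 * m * q)) := sum_le_sum htail
    _ ≤ (2 : ℝ) ^ (-√w) / (4 * q) := sum_pow_mul_four_rpow_le hq0 (sqrt_nonneg w) T

/-- If `X 1, …, X T` are `{0,1}`-valued random variables such that the
conditional expectation of `X i` given `X 1, …, X (i-1)` is at most `q` a.s., `0 < q < 1`,
then for every real `w > 0`, the probability that some suffix sum
`∑_{i = T - m + 1}^{T} X i` (for `1 ≤ m ≤ T`) is at least `√w + 6 m q` is at most
`2^{-√w} / (4 q)`. -/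
theorem interval_error_bound
    {Ω : Type*} [mΩ : MeasurableSpace Ω] (μ : Measure Ω) [IsProbabilityMeasure μ]
    (T : ℕ) (X : ℕ → Ω → ℝ) (q : ℝ) (hq0 : 0 < q) (hq1 : q < 1)
    (hmeas : ∀ i, Measurable (X i))
    (h01 : ∀ i ω, X i ω = 0 ∨ X i ω = 1)
    (hcond : ∀ i ∈ Finset.Icc 1 T, ∀ᵐ ω ∂μ, (μ[X i | pastSigmaNat X i]) ω ≤ q)
    (w : ℝ) (hw : 0 < w) :
    μ {ω | ∃ m : ℕ, 1 ≤ m ∧ m ≤ T ∧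
        Real.sqrt w + 6 * m * q ≤ ∑ i ∈ Finset.Icc (T - m + 1) T, X i ω} ≤
      ENNReal.ofReal ((2 : ℝ) ^ (-Real.sqrt w) / (4 * q)) :=
  interval_error_bound_general (mΩ := mΩ) μ T X q hq0 hmeas h01 hcond w
end

section
/- Let κ ≥ 2 be a real number, and let N ≥ 0, M ≥ 0, c > 0 be reals and p ∈ (0,1]. Then: (i) Φ_κ(N, c + M/√κ, min(p, 1/√κ), 0) ≤ Φ_κ(N, c, p, M) + 2; (ii) if moreover p ≤ 1/√κ, then Φ_κ(N, c + M/√κ, min(p, 1/√κ), 0) ≤ Φ_κ(N, c, p, M); and (iii) if moreover M ≥ 2·ln κ, then Φ_κ(N, c + M/√κ, min(p, 1/√κ), 0) ≤ Φ_κ(N, c, p, M). -/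
/-- The potential function of the Decodable Backoff Algorithm:
`Φ_κ(N, c, p, M) = N + max(0, 4κ·ln(c/√κ)/ln κ) + 4·ln(1/p)/ln κ + 5M/ln κ`. -/
noncomputable def Phi (κ N c p M : ℝ) : ℝ :=
  N + max 0 (4 * κ * Real.log (c / Real.sqrt κ) / Real.log κ)
    + 4 * Real.log (1 / p) / Real.log κ + 5 * M / Real.log κ

/-!
Activating the `M` inactive packets raises `c/√κ` by exactly `M/κ`. Since `log⁺` is
1-Lipschitz on `[0, ∞)`, the contention term grows by at most `4κ · (M/κ) / ln κ = 4M/ln κ`,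
less than the `5M/ln κ` released by emptying the inactive pool. Lowering the minimum
probability to `1/√κ` costs at most `4 ln √κ / ln κ = 2`, and nothing when `p ≤ 1/√κ`;
when `M ≥ 2 ln κ` the spare `M/ln κ ≥ 2` pays for it.
-/

open Real

theorem Real.posLog_add_le {x y : ℝ} (hx : 0 ≤ x) (hy : 0 ≤ y) :
    log⁺ (x + y) ≤ log⁺ x + y := by
  rw [posLog_eq_log_max_one hx, posLog_eq_log_max_one (by positivity)]
  set m := max 1 x
  have hm : 1 ≤ m := le_max_left 1 x
  have hexp : 1 + y ≤ exp y := by linarith [add_one_le_exp y]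
  calc log (max 1 (x + y)) ≤ log (m * exp y) := by
        refine log_le_log (one_pos.trans_le (le_max_left _ _)) (max_le ?_ ?_)
        · nlinarith
        · nlinarith [le_max_right 1 x]
    _ = log m + y := by rw [log_mul (by positivity) (exp_pos y).ne', log_exp]

theorem Real.log_one_div_min_le {p q : ℝ} (hp0 : 0 < p) (hp1 : p ≤ 1) (hq0 : 0 < q)
    (hq1 : q ≤ 1) : log (1 / min p q) ≤ log (1 / p) + log (1 / q) := by
  have hp : 0 ≤ log (1 / p) := log_nonneg (by rw [le_div_iff₀ hp0]; linarith)
  have hq : 0 ≤ log (1 / q) := log_nonneg (by rw [le_div_iff₀ hq0]; linarith)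
  rcases le_total p q with h | h
  · rw [min_eq_left h]; linarith
  · rw [min_eq_right h]; linarith

theorem max_zero_contention_le {κ c M : ℝ} (hκ : 1 < κ) (hc : 0 < c) (hM : 0 ≤ M) :
    max 0 (4 * κ * log ((c + M / √κ) / √κ) / log κ)
      ≤ max 0 (4 * κ * log (c / √κ) / log κ) + 4 * M / log κ := by
  have hL : 0 < log κ := log_pos hκ
  have hs : 0 < √κ := sqrt_pos.mpr (by linarith)
  have hshift : (c + M / √κ) / √κ = c / √κ + M / κ := by
    rw [add_div, div_div, mul_self_sqrt (by linarith)]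
  have hscale : ∀ y, max 0 (4 * κ * log y / log κ) = 4 * κ / log κ * log⁺ y := fun y => by
    rw [posLog_apply, mul_max_of_nonneg _ _ (by positivity), mul_zero]
    ring_nf
  rw [hscale, hscale, hshift]
  calc 4 * κ / log κ * log⁺ (c / √κ + M / κ)
      ≤ 4 * κ / log κ * (log⁺ (c / √κ) + M / κ) := by
        gcongr
        exact posLog_add_le (by positivity) (by positivity)
    _ = 4 * κ / log κ * log⁺ (c / √κ) + 4 * M / log κ := by
        field_simp

theorem Phi_activate_le {κ c M : ℝ} (N p : ℝ) (hκ : 1 < κ) (hc : 0 < c) (hM : 0 ≤ M) :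
    Phi κ N (c + M / √κ) p 0 ≤ Phi κ N c p M - M / log κ := by
  have hcontention := max_zero_contention_le hκ hc hM
  have hfive : 5 * M / log κ - M / log κ = 4 * M / log κ := by ring
  simp only [Phi, mul_zero, zero_div, add_zero]
  linarith

theorem Phi_min_one_div_sqrt_le {κ p : ℝ} (N c M : ℝ) (hκ : 1 < κ) (hp0 : 0 < p)
    (hp1 : p ≤ 1) : Phi κ N c (min p (1 / √κ)) M ≤ Phi κ N c p M + 2 := by
  have hL : 0 < log κ := log_pos hκ
  have hs : 1 ≤ √κ := one_le_sqrt.mpr hκ.le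
  have hmin := log_one_div_min_le hp0 hp1 (by positivity) (div_le_one_of_le₀ hs (by positivity))
  rw [one_div_one_div, log_sqrt (by linarith)] at hmin
  have hterm : 4 * log (1 / min p (1 / √κ)) / log κ ≤ 4 * log (1 / p) / log κ + 2 :=
    calc 4 * log (1 / min p (1 / √κ)) / log κ
        ≤ 4 * (log (1 / p) + log κ / 2) / log κ := by gcongr
      _ = 4 * log (1 / p) / log κ + 2 := by field_simp; ring
  simp only [Phi]
  linarith

theorem activation_lemma_general (κ N c p M : ℝ) (hκ : 2 ≤ κ) (hM : 0 ≤ M)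
    (hc : 0 < c) (hp0 : 0 < p) (hp1 : p ≤ 1) :
    Phi κ N (c + M / Real.sqrt κ) (min p (1 / Real.sqrt κ)) 0 ≤ Phi κ N c p M + 2 ∧
    (p ≤ 1 / Real.sqrt κ →
      Phi κ N (c + M / Real.sqrt κ) (min p (1 / Real.sqrt κ)) 0 ≤ Phi κ N c p M) ∧
    (2 * Real.log κ ≤ M →
      Phi κ N (c + M / Real.sqrt κ) (min p (1 / Real.sqrt κ)) 0 ≤ Phi κ N c p M) := by
  have hκ1 : 1 < κ := by linarith
  have hL : 0 < log κ := log_pos hκ1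
  have hactivate := Phi_activate_le N (min p (1 / √κ)) hκ1 hc hM
  have hlower := Phi_min_one_div_sqrt_le N c M hκ1 hp0 hp1
  have hreleased : 0 ≤ M / log κ := by positivity
  refine ⟨by linarith, fun hps => ?_, fun hMbig => ?_⟩
  · have hsame := Phi_activate_le N p hκ1 hc hM
    rw [min_eq_left hps]
    linarith
  · have : 2 ≤ M / log κ := by rw [le_div_iff₀ hL]; linarith
    linarith

/-- the packet-activation lemma. When all `M` inactive packets activate,
(i) the potential increases by at most 2; (ii) it does not increase if `p ≤ 1/√κ`;
(iii) it does not increase if `M ≥ 2·ln κ`. -/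
theorem activation_lemma (κ N c p M : ℝ) (hκ : 2 ≤ κ) (hN : 0 ≤ N) (hM : 0 ≤ M)
    (hc : 0 < c) (hp0 : 0 < p) (hp1 : p ≤ 1) :
    Phi κ N (c + M / Real.sqrt κ) (min p (1 / Real.sqrt κ)) 0 ≤ Phi κ N c p M + 2 ∧
    (p ≤ 1 / Real.sqrt κ →
      Phi κ N (c + M / Real.sqrt κ) (min p (1 / Real.sqrt κ)) 0 ≤ Phi κ N c p M) ∧
    (2 * Real.log κ ≤ M →
      Phi κ N (c + M / Real.sqrt κ) (min p (1 / Real.sqrt κ)) 0 ≤ Phi κ N c p M) :=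
  activation_lemma_general κ N c p M hκ hM hc hp0 hp1
end

section
/- Let κ > 1 be a real number and let N, M, ℓ, i ≥ 0 be reals with ℓ ≤ N. Let c, c', p, p' be reals with 0 < c' ≤ c and 0 < p ≤ p' ≤ 1. Then Φ_κ(N − ℓ + i, c', p', M + i) ≤ Φ_κ(N, c, p, M) − ℓ + i·(1 + 5/ln κ). -/
open Set

theorem Phi_add_add (κ N a c p M b : ℝ) :
    Phi κ (N + a) c p (M + b) = Phi κ N c p M + a + 5 * b / Real.log κ := by
  unfold Phi
  ring

section

variable {κ : ℝ} (hκ : 1 ≤ κ) (N M : ℝ)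
include hκ

theorem Phi_monotoneOn_contention (p : ℝ) : MonotoneOn (fun c ↦ Phi κ N c p M) (Ioi 0) := by
  intro c' hc' c _ hcc
  have : 0 < c' := hc'
  have : 0 < κ := by linarith
  have : 0 ≤ Real.log κ := Real.log_nonneg hκ
  dsimp only [Phi]
  gcongr

theorem Phi_antitoneOn_minProb (c : ℝ) : AntitoneOn (fun p ↦ Phi κ N c p M) (Ioi 0) := by
  intro p _ p' hp' hpp
  have : 0 < p' := hp'
  have : 0 ≤ Real.log κ := Real.log_nonneg hκ
  dsimp only [Phi]
  gcongr

end

theorem successful_epoch_general (κ N M ℓ i c c' p p' : ℝ) (hκ : 1 < κ)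
    (hc' : 0 < c') (hcc : c' ≤ c) (hp : 0 < p) (hpp : p ≤ p') :
    Phi κ (N - ℓ + i) c' p' (M + i) ≤ Phi κ N c p M - ℓ + i * (1 + 5 / Real.log κ) := by
  have hcontention : Phi κ N c' p' M ≤ Phi κ N c p' M :=
    Phi_monotoneOn_contention hκ.le N M p' hc' (hc'.trans_le hcc) hcc
  have hminProb : Phi κ N c p' M ≤ Phi κ N c p M :=
    Phi_antitoneOn_minProb hκ.le N M c hp (hp.trans_le hpp) hpp
  calc Phi κ (N - ℓ + i) c' p' (M + i) = Phi κ N c' p' M + (i - ℓ) + 5 * i / Real.log κ := by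
        rw [← Phi_add_add, sub_add_eq_add_sub, add_sub_assoc]
    _ ≤ Phi κ N c p M + (i - ℓ) + 5 * i / Real.log κ := by gcongr; exact hcontention.trans hminProb
    _ = Phi κ N c p M - ℓ + i * (1 + 5 / Real.log κ) := by ring

/-- the successful-epoch lemma. If `ℓ` packets are delivered, `i` packets
arrive inactive, the contention does not increase, and the minimum joining probability
does not decrease, then the potential decreases by at least `ℓ − i·(1 + 5/ln κ)`. -/
theorem successful_epoch (κ N M ℓ i c c' p p' : ℝ) (hκ : 1 < κ)
    (hN : 0 ≤ N) (hM : 0 ≤ M) (hℓ : 0 ≤ ℓ) (hi : 0 ≤ i) (hℓN : ℓ ≤ N)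
    (hc' : 0 < c') (hcc : c' ≤ c) (hp : 0 < p) (hpp : p ≤ p') (hp' : p' ≤ 1) :
    Phi κ (N - ℓ + i) c' p' (M + i) ≤ Phi κ N c p M - ℓ + i * (1 + 5 / Real.log κ) :=
  successful_epoch_general κ N M ℓ i c c' p p' hκ hc' hcc hp hpp
end

section
/- Let κ > 1 be a real number, and let N, M, i ≥ 0, c > 0 and p ∈ (0,1] be reals. Then Φ_κ(N + i, c·κ^{−1/4}, p·κ^{−1/4}, M + i) ≤ Φ_κ(N, c, p, M) + 1 + i·(1 + 5/ln κ). -/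
/-!
Both counts `N` and `M` enter `Φ_κ` affinely, so the `i` arrivals contribute exactly
`i·(1 + 5/ln κ)`. Scaling `c` and `p` by `κ^{-s}` shifts `ln c` and `ln p` by `-s·ln κ`:
this can only lower the contention term and raises the `p`-term by exactly `4s`,
which is `1` for `s = 1/4`.
-/

open Real

lemma Real.log_mul_rpow {x κ : ℝ} (hx : x ≠ 0) (hκ : 0 < κ) (y : ℝ) :
    log (x * κ ^ y) = log x + y * log κ := by
  rw [log_mul hx (rpow_pos_of_pos hκ y).ne', log_rpow hκ]

namespace Phi

lemma add_arrivals (κ N c p M i : ℝ) :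
    Phi κ (N + i) c p (M + i) = Phi κ N c p M + i * (1 + 5 / log κ) := by
  unfold Phi
  ring

variable {κ s : ℝ}

lemma contention_term_rpow_neg_le (hκ : 1 < κ) (hs : 0 ≤ s) {c : ℝ} (hc : c ≠ 0) :
    max 0 (4 * κ * log (c * κ ^ (-s) / √κ) / log κ)
      ≤ max 0 (4 * κ * log (c / √κ) / log κ) := by
  have hκ0 : 0 < κ := zero_lt_one.trans hκ
  have hL : log κ ≠ 0 := (log_pos hκ).ne'
  have hshift : log (c * κ ^ (-s) / √κ) = log (c / √κ) - s * log κ := by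
    rw [mul_div_right_comm, log_mul_rpow (div_ne_zero hc (sqrt_pos.2 hκ0).ne') hκ0]
    ring
  refine max_le_max le_rfl ?_
  calc 4 * κ * log (c * κ ^ (-s) / √κ) / log κ
      = 4 * κ * log (c / √κ) / log κ - 4 * κ * s := by rw [hshift]; field_simp
    _ ≤ 4 * κ * log (c / √κ) / log κ := by nlinarith

lemma probability_term_rpow_neg (hκ : 1 < κ) {p : ℝ} (hp : p ≠ 0) :
    4 * log (1 / (p * κ ^ (-s))) / log κ = 4 * log (1 / p) / log κ + 4 * s := by
  have hL : log κ ≠ 0 := (log_pos hκ).ne'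
  rw [one_div, one_div, log_inv, log_inv, log_mul_rpow hp (zero_lt_one.trans hκ)]
  field_simp
  ring

lemma rpow_neg_le (hκ : 1 < κ) (hs : 0 ≤ s) (N M : ℝ) {c p : ℝ} (hc : c ≠ 0) (hp : p ≠ 0) :
    Phi κ N (c * κ ^ (-s)) (p * κ ^ (-s)) M ≤ Phi κ N c p M + 4 * s := by
  unfold Phi
  rw [probability_term_rpow_neg hκ hp]
  linarith [contention_term_rpow_neg_le hκ hs hc]

end Phi

theorem overfull_error_epoch_general (κ N M i c p : ℝ) (hκ : 1 < κ)
    (hc : 0 < c) (hp0 : 0 < p) :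
    Phi κ (N + i) (c * κ ^ (-(1 : ℝ) / 4)) (p * κ ^ (-(1 : ℝ) / 4)) (M + i) ≤
      Phi κ N c p M + 1 + i * (1 + 5 / Real.log κ) := by
  have hscale := Phi.rpow_neg_le hκ (by norm_num : (0 : ℝ) ≤ 1 / 4) N M hc.ne' hp0.ne'
  rw [neg_div, Phi.add_arrivals]
  linarith

/-- the overfull case of the error-epoch lemma. In an overfull epoch with
`i` arrivals, all joining probabilities (hence `c` and `p`) are multiplied by `κ^{-1/4}`,
and the potential increases by at most `1 + i·(1 + 5/ln κ)`. -/
theorem overfull_error_epoch (κ N M i c p : ℝ) (hκ : 1 < κ)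
    (hN : 0 ≤ N) (hM : 0 ≤ M) (hi : 0 ≤ i) (hc : 0 < c) (hp0 : 0 < p) (hp1 : p ≤ 1) :
    Phi κ (N + i) (c * κ ^ (-(1 : ℝ) / 4)) (p * κ ^ (-(1 : ℝ) / 4)) (M + i) ≤
      Phi κ N c p M + 1 + i * (1 + 5 / Real.log κ) :=
  overfull_error_epoch_general κ N M i c p hκ hc hp0
end

section
/- Let κ ≥ 2 be a real number, and let N, M, i ≥ 0, c > 0 and p ∈ (0,1] be reals. Then Φ_κ(N + i, c·κ^{1/4} + (M + i)/√κ, min(p·κ^{1/4}, 1/√κ), 0) ≤ Φ_κ(N, c, p, M) + κ + 2 + i·(1 + 5/ln κ). -/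
/-! The activations add `(M + i)/κ` to `c/√κ`, which costs at most `4(M + i)/ln κ` in the
contention term because `ln (y + t) ≤ max 0 (ln y) + t`; this is paid for by the `5M/ln κ` of the
inactive packets and the `5i/ln κ` of the arrivals. The factor `κ^{1/4}` costs
`4κ·ln κ^{1/4}/ln κ = κ` in the contention term, and since the new minimum probability is at least
`p/√κ`, the probability term grows by at most `4·ln √κ/ln κ = 2`. -/

namespace Real

lemma log_add_le_max_zero_log_add {y t : ℝ} (hy : 0 < y) (ht : 0 ≤ t) :
    log (y + t) ≤ max 0 (log y) + t := by
  have hlog_one_add : log (1 + t) ≤ t := by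
    linarith [log_le_sub_one_of_pos (by linarith : 0 < 1 + t)]
  rcases le_total y 1 with hy1 | hy1
  · calc log (y + t) ≤ log (1 + t) := log_le_log (by positivity) (by linarith)
      _ ≤ max 0 (log y) + t := by linarith [le_max_left 0 (log y)]
  · calc log (y + t) ≤ log (y * (1 + t)) := log_le_log (by positivity) (by nlinarith)
      _ = log y + log (1 + t) := log_mul hy.ne' (by positivity)
      _ ≤ max 0 (log y) + t := by linarith [le_max_right 0 (log y)]

lemma max_zero_mul_log_mul_add_le {K x a t : ℝ} (hK : 0 ≤ K) (hx : 0 < x) (ha : 1 ≤ a)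
    (ht : 0 ≤ t) : max 0 (K * log (x * a + t)) ≤ max 0 (K * log x) + K * (log a + t) := by
  have hloga : 0 ≤ log a := log_nonneg ha
  have hlog_mul : max 0 (log (x * a)) ≤ max 0 (log x) + log a := by
    rw [log_mul hx.ne' (by positivity)]
    exact max_le (by linarith [le_max_left 0 (log x)]) (by linarith [le_max_right 0 (log x)])
  have hlog : log (x * a + t) ≤ max 0 (log x) + (log a + t) := by
    linarith [log_add_le_max_zero_log_add (by positivity : 0 < x * a) ht]
  calc max 0 (K * log (x * a + t)) ≤ max 0 (K * (max 0 (log x) + (log a + t))) :=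
        max_le_max_left 0 (mul_le_mul_of_nonneg_left hlog hK)
    _ = max 0 (K * log x) + K * (log a + t) := by
        rw [mul_add, mul_max_of_nonneg _ _ hK, mul_zero, max_eq_right (by positivity)]

lemma log_one_div_min_mul_le {p a b : ℝ} (hp0 : 0 < p) (hp1 : p ≤ 1) (hb : 0 < b) (hba : b ≤ a) :
    log (1 / min (p * a) b) ≤ log (1 / p) + log (1 / b) := by
  have hpb : p * b ≤ min (p * a) b :=
    le_min (mul_le_mul_of_nonneg_left hba hp0.le) (mul_le_of_le_one_left hb.le hp1)
  calc log (1 / min (p * a) b) ≤ log (1 / (p * b)) :=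
        log_le_log (one_div_pos.2 ((by positivity : 0 < p * b).trans_le hpb))
          (one_div_le_one_div_of_le (by positivity) hpb)
    _ = log (1 / p) + log (1 / b) := by
        rw [← log_mul (by positivity) (by positivity), one_div_mul_one_div]

end Real

open Real

section Silent

variable {κ : ℝ}

lemma silent_contention_term_le (hκ : 1 < κ) {c m : ℝ} (hc : 0 < c) (hm : 0 ≤ m) :
    max 0 (4 * κ * log ((c * κ ^ ((1 : ℝ) / 4) + m / √κ) / √κ) / log κ) ≤
      max 0 (4 * κ * log (c / √κ) / log κ) + κ + 4 * m / log κ := by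
  have hκ0 : 0 < κ := by linarith
  have hL : 0 < log κ := log_pos hκ
  have hsplit : (c * κ ^ ((1 : ℝ) / 4) + m / √κ) / √κ = c / √κ * κ ^ ((1 : ℝ) / 4) + m / κ := by
    have hs : √κ * √κ = κ := mul_self_sqrt hκ0.le
    field_simp
    linear_combination (-m) * hs
  have hq : 1 ≤ κ ^ ((1 : ℝ) / 4) := one_le_rpow hκ.le (by norm_num)
  have key := max_zero_mul_log_mul_add_le (K := 4 * κ / log κ) (by positivity)
    (by positivity : 0 < c / √κ) hq (by positivity : 0 ≤ m / κ)
  rw [log_rpow hκ0] at key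
  simp only [mul_div_right_comm (4 * κ), hsplit]
  convert key using 1
  field_simp
  ring

lemma silent_probability_term_le (hκ : 1 < κ) {p : ℝ} (hp0 : 0 < p) (hp1 : p ≤ 1) :
    4 * log (1 / min (p * κ ^ ((1 : ℝ) / 4)) (1 / √κ)) / log κ ≤ 4 * log (1 / p) / log κ + 2 := by
  have hκ0 : 0 < κ := by linarith
  have hL : 0 < log κ := log_pos hκ
  have hq : 1 ≤ κ ^ ((1 : ℝ) / 4) := one_le_rpow hκ.le (by norm_num)
  have hs : 1 / √κ ≤ 1 := (div_le_one (by positivity)).2 (one_le_sqrt.2 hκ.le)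
  have hmin := log_one_div_min_mul_le hp0 hp1 (by positivity) (hs.trans hq)
  rw [one_div_one_div, log_sqrt hκ0.le] at hmin
  calc 4 * log (1 / min (p * κ ^ ((1 : ℝ) / 4)) (1 / √κ)) / log κ
      ≤ 4 * (log (1 / p) + log κ / 2) / log κ := by gcongr
    _ = 4 * log (1 / p) / log κ + 2 := by field_simp; ring

end Silent

theorem silent_error_epoch_general (κ N M i c p : ℝ) (hκ : 2 ≤ κ)
    (hM : 0 ≤ M) (hi : 0 ≤ i) (hc : 0 < c) (hp0 : 0 < p) (hp1 : p ≤ 1) :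
    Phi κ (N + i) (c * κ ^ ((1 : ℝ) / 4) + (M + i) / Real.sqrt κ)
        (min (p * κ ^ ((1 : ℝ) / 4)) (1 / Real.sqrt κ)) 0 ≤
      Phi κ N c p M + κ + 2 + i * (1 + 5 / Real.log κ) := by
  have hκ1 : 1 < κ := by linarith
  have hL : 0 < log κ := log_pos hκ1
  have hcontention := silent_contention_term_le hκ1 hc (add_nonneg hM hi)
  have hprobability := silent_probability_term_le hκ1 hp0 hp1
  have hactivation : 4 * (M + i) / log κ ≤ 5 * M / log κ + 5 * i / log κ := by
    rw [← add_div]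
    gcongr
    linarith
  have harrivals : i * (1 + 5 / log κ) = i + 5 * i / log κ := by field_simp
  unfold Phi
  rw [mul_zero, zero_div, harrivals]
  linarith

/-- the silent case of the error-epoch lemma, combined with the subsequent
packet activations. In a silent epoch with `i` arrivals, all joining probabilities are
multiplied by `κ^{1/4}`, then all `M + i` inactive packets activate with initial joining
probability `1/√κ`; the potential increases by at most `κ + 2 + i·(1 + 5/ln κ)`. -/
theorem silent_error_epoch (κ N M i c p : ℝ) (hκ : 2 ≤ κ)
    (hN : 0 ≤ N) (hM : 0 ≤ M) (hi : 0 ≤ i) (hc : 0 < c) (hp0 : 0 < p) (hp1 : p ≤ 1) :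
    Phi κ (N + i) (c * κ ^ ((1 : ℝ) / 4) + (M + i) / Real.sqrt κ)
        (min (p * κ ^ ((1 : ℝ) / 4)) (1 / Real.sqrt κ)) 0 ≤
      Phi κ N c p M + κ + 2 + i * (1 + 5 / Real.log κ) :=
  silent_error_epoch_general κ N M i c p hκ hM hi hc hp0 hp1
end

section
/- Let κ > 1 be a real number, and let N, M ≥ 0 and p ∈ (0,1] be reals, and let c be a real with c ≥ κ^{3/4}. Then Φ_κ(N, c·κ^{−1/4}, p·κ^{−1/4}, M) ≤ Φ_κ(N, c, p, M) − (κ − 1). -/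
/-!
Once the contention is at least `√κ` before and after the epoch, both `max` terms of `Φ_κ` are
their second argument, and scaling every probability by `κ^a` moves `ln c` up and `ln (1/p)`
down by `a·ln κ`. The potential therefore changes by exactly `4a(κ - 1)`, which is `-(κ - 1)`
for `a = -1/4`; the hypothesis `c ≥ κ^{3/4}` is what keeps `c·κ^{-1/4}` above `√κ`.
-/

open Real

namespace Phi

variable {κ c : ℝ}

lemma contention_term_eq_of_sqrt_le (hκ : 1 < κ) (hc : √κ ≤ c) :
    max 0 (4 * κ * log (c / √κ) / log κ) = 4 * κ * log (c / √κ) / log κ := by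
  have hlog : 0 ≤ log (c / √κ) :=
    log_nonneg <| (one_le_div (sqrt_pos.2 (by linarith))).2 hc
  exact max_eq_right <| div_nonneg (by positivity) (log_pos hκ).le

lemma rpow_scale (N M p a : ℝ) (hκ : 1 < κ) (hp : p ≠ 0) (hc : √κ ≤ c)
    (hca : √κ ≤ c * κ ^ a) :
    Phi κ N (c * κ ^ a) (p * κ ^ a) M = Phi κ N c p M + 4 * a * (κ - 1) := by
  have hκ0 : 0 < κ := by linarith
  have hc0 : 0 < c := (sqrt_pos.2 hκ0).trans_le hc
  have hκa : κ ^ a ≠ 0 := (rpow_pos_of_pos hκ0 a).ne'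
  have hlogc : log (c * κ ^ a / √κ) = log (c / √κ) + a * log κ := by
    rw [mul_div_right_comm, log_mul (div_pos hc0 (sqrt_pos.2 hκ0)).ne' hκa, log_rpow hκ0]
  have hlogp : log (1 / (p * κ ^ a)) = log (1 / p) - a * log κ := by
    rw [one_div, log_inv, log_mul hp hκa, log_rpow hκ0, one_div, log_inv]
    ring
  unfold Phi
  rw [contention_term_eq_of_sqrt_le hκ hc, contention_term_eq_of_sqrt_le hκ hca, hlogc, hlogp]
  field_simp [(log_pos hκ).ne']
  ring

end Phi

theorem overfull_nonerror_epoch_general (κ N M c p : ℝ) (hκ : 1 < κ)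
    (hc : κ ^ ((3 : ℝ) / 4) ≤ c) (hp0 : 0 < p) :
    Phi κ N (c * κ ^ (-(1 : ℝ) / 4)) (p * κ ^ (-(1 : ℝ) / 4)) M ≤
      Phi κ N c p M - (κ - 1) := by
  have hκ0 : 0 < κ := by linarith
  have hsqrt : √κ = κ ^ ((3 : ℝ) / 4) * κ ^ (-(1 : ℝ) / 4) := by
    rw [sqrt_eq_rpow, ← rpow_add hκ0]
    norm_num
  have hca : √κ ≤ c * κ ^ (-(1 : ℝ) / 4) :=
    hsqrt ▸ mul_le_mul_of_nonneg_right hc (rpow_nonneg hκ0.le _)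
  have hc' : √κ ≤ c := by
    refine hca.trans (mul_le_of_le_one_right ?_ ?_)
    · exact (rpow_pos_of_pos hκ0 _).le.trans hc
    · exact rpow_le_one_of_one_le_of_nonpos hκ.le (by norm_num)
  rw [Phi.rpow_scale N M p _ hκ hp0.ne' hc' hca]
  linarith

/-- Case 1 of the non-error-epoch lemma. In an overfull epoch that is not
an error epoch (`c ≥ κ^{3/4}`), all joining probabilities are multiplied by `κ^{-1/4}`,
and the potential decreases by at least `κ − 1`. -/
theorem overfull_nonerror_epoch (κ N M c p : ℝ) (hκ : 1 < κ)
    (hN : 0 ≤ N) (hM : 0 ≤ M) (hc : κ ^ ((3 : ℝ) / 4) ≤ c) (hp0 : 0 < p) (hp1 : p ≤ 1) :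
    Phi κ N (c * κ ^ (-(1 : ℝ) / 4)) (p * κ ^ (-(1 : ℝ) / 4)) M ≤
      Phi κ N c p M - (κ - 1) :=
  overfull_nonerror_epoch_general κ N M c p hκ hc hp0
end

section
/- Let κ > 1 be a real number, and let N, M ≥ 0 be reals, c > 0 with c·κ^{1/4} ≤ √κ, and p ∈ (0,1] with p·κ^{1/4} ≤ 1. Then Φ_κ(N, c·κ^{1/4}, p·κ^{1/4}, M) ≤ Φ_κ(N, c, p, M) − 1. -/
open Real

/- Multiplying the contention by `κ^{1/4}` keeps it below `√κ`, so the contention term of the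
potential is `0` afterwards; multiplying `p` by `κ^{1/4}` lowers `4 ln(1/p)/ln κ` by exactly `1`. -/

lemma max_zero_mul_log_div_eq_zero {a b x : ℝ} (ha : 0 ≤ a) (hb : 0 ≤ b) (hx0 : 0 ≤ x)
    (hx1 : x ≤ 1) : max 0 (a * log x / b) = 0 :=
  max_eq_left <| div_nonpos_of_nonpos_of_nonneg
    (mul_nonpos_of_nonneg_of_nonpos ha (log_nonpos hx0 hx1)) hb

lemma log_one_div_mul_rpow {p κ : ℝ} (hp : 0 < p) (hκ : 0 < κ) (t : ℝ) :
    log (1 / (p * κ ^ t)) = log (1 / p) - t * log κ := by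
  rw [one_div, one_div, log_inv, log_inv, log_mul hp.ne' (rpow_pos_of_pos hκ t).ne',
    log_rpow hκ]
  ring

theorem silent_nonerror_epoch_general (κ N M c p : ℝ) (hκ : 1 < κ)
    (hc0 : 0 < c) (hc : c * κ ^ ((1 : ℝ) / 4) ≤ Real.sqrt κ)
    (hp0 : 0 < p) :
    Phi κ N (c * κ ^ ((1 : ℝ) / 4)) (p * κ ^ ((1 : ℝ) / 4)) M ≤
      Phi κ N c p M - 1 := by
  have hκ0 : 0 < κ := one_pos.trans hκ
  have hlogκ : 0 < log κ := log_pos hκ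
  have hcontention :
      max 0 (4 * κ * log (c * κ ^ ((1 : ℝ) / 4) / √κ) / log κ) = 0 :=
    max_zero_mul_log_div_eq_zero (by positivity) hlogκ.le (by positivity)
      ((div_le_one (sqrt_pos.mpr hκ0)).mpr hc)
  have hprob : 4 * log (1 / (p * κ ^ ((1 : ℝ) / 4))) / log κ =
      4 * log (1 / p) / log κ - 1 := by
    rw [log_one_div_mul_rpow hp0 hκ0]
    field_simp
  unfold Phi
  rw [hcontention, hprob]
  linarith [le_max_left 0 (4 * κ * log (c / √κ) / log κ)]

/-- Case 2 of the non-error-epoch lemma. In a silent epoch with low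
contention (`c·κ^{1/4} ≤ √κ`), all joining probabilities are multiplied by `κ^{1/4}`,
and the potential decreases by at least `1`. -/
theorem silent_nonerror_epoch (κ N M c p : ℝ) (hκ : 1 < κ)
    (hN : 0 ≤ N) (hM : 0 ≤ M) (hc0 : 0 < c) (hc : c * κ ^ ((1 : ℝ) / 4) ≤ Real.sqrt κ)
    (hp0 : 0 < p) (hp1 : p * κ ^ ((1 : ℝ) / 4) ≤ 1) :
    Phi κ N (c * κ ^ ((1 : ℝ) / 4)) (p * κ ^ ((1 : ℝ) / 4)) M ≤
      Phi κ N c p M - 1 :=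
  silent_nonerror_epoch_general κ N M c p hκ hc0 hc hp0
end
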